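/- Let Y ⊆ X be nonempty. If cls(Y) is compact then α(Y) = O. Conversely, if X is a complete admissible space and α(Y) = O, then cls(Y) is compact. -/
import Mathlib


open Set

universe u

variable {X : Type u}

/-- `U` is a cover of `X`. -/
def IsCover (X : Type u) (U : Set (Set X)) : Prop := ∀ x : X, ∃ u ∈ U, x ∈ u

/-- `V` refines `U`. -/
def Refines (V U : Set (Set X)) : Prop := ∀ v ∈ V, ∃ u ∈ U, v ⊆ u

/-- `V` double-refines `U` (`V ≤ ½U`). -/
def DblRefines (V U : Set (Set X)) : Prop :=
  ∀ v₁ ∈ V, ∀ v₂ ∈ V, (v₁ ∩ v₂).Nonempty → ∃ u ∈ U, v₁ ∪ v₂ ⊆ u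

/-- The star `St[Y,U]` of a set `Y` with respect to a covering `U`. -/
def starSet (Y : Set X) (U : Set (Set X)) : Set X := ⋃₀ {u | u ∈ U ∧ (Y ∩ u).Nonempty}

/-- The star `St[x,U]` of a point. -/
def stx (x : X) (U : Set (Set X)) : Set X := ⋃₀ {u | u ∈ U ∧ x ∈ u}

/-- `O` is an admissible family of open coverings of the topological space `X`:
every member is an open covering, `O` is directed by double-refinement, and the
stars `St[x,U]`, `U ∈ O`, form a neighborhood base at each point `x`. -/
def IsAdmissible [TopologicalSpace X] (O : Set (Set (Set X))) : Prop :=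
  (∀ U ∈ O, ∀ u ∈ U, IsOpen u) ∧
  (∀ U ∈ O, IsCover X U) ∧
  (∀ U ∈ O, ∀ V ∈ O, ∃ W ∈ O, DblRefines W U ∧ DblRefines W V) ∧
  (∀ x : X, (nhds x).HasBasis (fun U => U ∈ O) (fun U => stx x U))

/-- `PowRefines n V U` means `V ≤ (1/2ⁿ)U` (iterated double-refinement);
for `n = 0` it degenerates to equality. -/
def PowRefines : ℕ → Set (Set X) → Set (Set X) → Prop
  | 0 => fun V U => V = U
  | n + 1 => fun V U => ∃ W : Set (Set X), DblRefines V W ∧ PowRefines n W U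

/-- The operation `E ↦ nE` on subsets of `O`. -/
def mulE (O : Set (Set (Set X))) (n : ℕ) (E : Set (Set (Set X))) : Set (Set (Set X)) :=
  {U | U ∈ O ∧ ∃ V ∈ E, PowRefines n V U}

/-- `ρ(x,y) = {U ∈ O : y ∈ St[x,U]}`. -/
def rho (O : Set (Set (Set X))) (x y : X) : Set (Set (Set X)) :=
  {U | U ∈ O ∧ y ∈ stx x U}

/-- The diameter `D(Y) = ⋂_{x,y ∈ Y} ρ(x,y)`. -/
def diamD (O : Set (Set (Set X))) (Y : Set X) : Set (Set (Set X)) :=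
  ⋂ x ∈ Y, ⋂ y ∈ Y, rho O x y

/-- A net is `O`-Cauchy. -/
def IsCauchyNet {ι : Type*} [Preorder ι] (O : Set (Set (Set X))) (s : ι → X) : Prop :=
  ∀ U ∈ O, ∃ i₀ : ι, ∀ i ≥ i₀, ∀ j ≥ i₀, s i ∈ stx (s j) U

/-- Convergence of a net to a point. -/
def ConvNet [TopologicalSpace X] {ι : Type*} [Preorder ι] (s : ι → X) (p : X) : Prop :=
  ∀ N ∈ nhds p, ∃ i₀ : ι, ∀ i ≥ i₀, s i ∈ N

/-- `X` is a complete admissible space: every Cauchy net (over a nonempty directed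
preorder) converges. -/
def IsCompleteAdm [TopologicalSpace X] (O : Set (Set (Set X))) : Prop :=
  ∀ (ι : Type u) [Preorder ι] [Nonempty ι],
    (∀ i j : ι, ∃ k, i ≤ k ∧ j ≤ k) →
    ∀ s : ι → X, IsCauchyNet O s → ∃ p : X, ConvNet s p

/-- `X` is totally bounded: each `U ∈ O` admits finitely many points whose
`U`-stars cover `X`. -/
def TotallyBoundedAdm (O : Set (Set (Set X))) : Prop :=
  ∀ U ∈ O, ∃ (n : ℕ) (p : Fin n → X), (⋃ i, stx (p i) U) = univ

/-- The star measure of noncompactness. -/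
def alphaM (O : Set (Set (Set X))) (Y : Set X) : Set (Set (Set X)) :=
  {U | U ∈ O ∧ ∃ (n : ℕ) (p : Fin n → X), Y ⊆ ⋃ i, stx (p i) U}

/-- The diameter measure of noncompactness. -/
def gammaM (O : Set (Set (Set X))) (Y : Set X) : Set (Set (Set X)) :=
  {U | U ∈ O ∧ ∃ (n : ℕ) (S : Fin n → Set X), Y ⊆ (⋃ i, S i) ∧ ∀ i, U ∈ diamD O (S i)}


section Aux
set_option linter.unusedSectionVars false

variable {X : Type u} [TopologicalSpace X]

lemma mem_stx_iff {x y : X} {U : Set (Set X)} :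
    y ∈ stx x U ↔ ∃ u ∈ U, x ∈ u ∧ y ∈ u := by
  simp only [stx, mem_sUnion, mem_setOf_eq]
  constructor
  · rintro ⟨u, ⟨hu, hx⟩, hy⟩; exact ⟨u, hu, hx, hy⟩
  · rintro ⟨u, hu, hx, hy⟩; exact ⟨u, ⟨hu, hx⟩, hy⟩

lemma stx_isOpen {x : X} {U : Set (Set X)} (h : ∀ u ∈ U, IsOpen u) :
    IsOpen (stx x U) :=
  isOpen_sUnion fun u hu => h u hu.1

lemma mem_stx_self {x : X} {U : Set (Set X)} (h : IsCover X U) : x ∈ stx x U := by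
  obtain ⟨u, hu, hx⟩ := h x
  exact mem_stx_iff.mpr ⟨u, hu, hx, hx⟩

/-- two points in a common `V`-star lie in each other's `U`-star if `V ≤ ½U`. -/
lemma star_trans {U V : Set (Set X)} (h : DblRefines V U) {x y z : X}
    (hy : y ∈ stx x V) (hz : z ∈ stx x V) : z ∈ stx y U := by
  obtain ⟨v₁, hv₁, hx₁, hy₁⟩ := mem_stx_iff.mp hy
  obtain ⟨v₂, hv₂, hx₂, hz₂⟩ := mem_stx_iff.mp hz
  obtain ⟨u, hu, hsub⟩ := h v₁ hv₁ v₂ hv₂ ⟨x, hx₁, hx₂⟩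
  exact mem_stx_iff.mpr ⟨u, hu, hsub (Or.inl hy₁), hsub (Or.inr hz₂)⟩

lemma stx_symm {x y : X} {U : Set (Set X)} (h : y ∈ stx x U) : x ∈ stx y U := by
  obtain ⟨u, hu, hx, hy⟩ := mem_stx_iff.mp h
  exact mem_stx_iff.mpr ⟨u, hu, hy, hx⟩

end Aux

theorem stmt19 [TopologicalSpace X] (O : Set (Set (Set X))) (hO : IsAdmissible O)
    (Y : Set X) (hY : Y.Nonempty) :
    (IsCompact (closure Y) → alphaM O Y = O) ∧
    (IsCompleteAdm O → alphaM O Y = O → IsCompact (closure Y)) := by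
  obtain ⟨hopen, hcov, hdir, hbasis⟩ := hO
  have hdbl : ∀ U ∈ O, ∃ V ∈ O, DblRefines V U := by
    intro U hU
    obtain ⟨W, hW, h1, _⟩ := hdir U hU U hU
    exact ⟨W, hW, h1⟩
  constructor
  · -- compact ⇒ α(Y) = O
    intro hK
    apply Set.eq_of_subset_of_subset (fun U hU => hU.1)
    intro U hU
    refine ⟨hU, ?_⟩
    have hcover : closure Y ⊆ ⋃ x : (closure Y : Set X), stx (x : X) U := by
      intro x hx
      exact mem_iUnion.mpr ⟨⟨x, hx⟩, mem_stx_self (hcov U hU)⟩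
    obtain ⟨t, ht⟩ := hK.elim_finite_subcover (fun x : (closure Y : Set X) => stx (x : X) U)
      (fun x => stx_isOpen (hopen U hU)) hcover
    classical
    refine ⟨t.toList.length, fun i => ((t.toList.get i : (closure Y : Set X)) : X), ?_⟩
    intro x hx
    have := ht (subset_closure hx)
    obtain ⟨z, hz, hxz⟩ := mem_iUnion₂.mp this
    obtain ⟨i, hi⟩ := List.mem_iff_get.mp (Finset.mem_toList.mpr hz)
    exact mem_iUnion.mpr ⟨i, by simp only [hi]; exact hxz⟩
  · -- complete + α(Y)=O ⇒ closure Y compact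
    intro hcompl halpha
    have htb : ∀ U ∈ O, ∃ (n : ℕ) (p : Fin n → X), Y ⊆ ⋃ i, stx (p i) U := by
      intro U hU
      have : U ∈ alphaM O Y := by rw [halpha]; exact hU
      exact this.2
    rw [isCompact_iff_ultrafilter_le_nhds]
    intro F hF
    have hclY : closure Y ∈ F := by
      simpa using hF (Filter.mem_principal_self _)
    -- the closure of a V-star is contained in a U-star when V ≤ ½U
    have hclstar : ∀ U ∈ O, ∀ V, DblRefines V U → V ∈ O → ∀ z : X,
        closure (stx z V) ⊆ stx z U := by
      intro U hU V hVU hV z x hx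
      have hnbhd : stx x V ∈ nhds x := (hbasis x).mem_of_mem hV
      obtain ⟨y, hy1, hy2⟩ := mem_closure_iff_nhds.mp hx _ hnbhd
      exact stx_symm (star_trans hVU (stx_symm hy1) (stx_symm hy2))
    -- F is a Cauchy filter: each U ∈ O admits a small set in F
    have hcauchyF : ∀ U ∈ O, ∃ A ∈ F, ∃ z : X, A ⊆ stx z U := by
      intro U hU
      obtain ⟨V, hV, hVU⟩ := hdbl U hU
      obtain ⟨n, p, hp⟩ := htb V hV
      have hsub : closure Y ⊆ ⋃ i, closure (stx (p i) V) := by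
        have : Y ⊆ ⋃ i, closure (stx (p i) V) :=
          hp.trans (iUnion_mono fun i => subset_closure)
        exact closure_minimal this (isClosed_iUnion_of_finite fun i => isClosed_closure)
      have hmem : (⋃ i, closure (stx (p i) V)) ∈ F := F.sets_of_superset hclY hsub
      rw [← biUnion_univ] at hmem
      obtain ⟨i, _, hi⟩ := (Ultrafilter.finite_biUnion_mem_iff finite_univ).mp hmem
      exact ⟨closure (stx (p i) V), hi, p i, hclstar U hU V hVU hV (p i)⟩
    classical
    -- the canonical net associated with F
    let ι : Type u := {q : X × Set X // q.2 ∈ F ∧ q.1 ∈ q.2}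
    letI : Preorder ι :=
      { le := fun a b => b.1.2 ⊆ a.1.2
        le_refl := fun a => subset_rfl
        le_trans := fun a b c hab hbc => Set.Subset.trans hbc hab }
    obtain ⟨y₀, hy₀⟩ := hY
    haveI : Nonempty ι := ⟨⟨(y₀, univ), Filter.univ_mem, mem_univ _⟩⟩
    have hdirected : ∀ i j : ι, ∃ k : ι, i ≤ k ∧ j ≤ k := by
      intro i j
      have hmem : i.1.2 ∩ j.1.2 ∈ F := F.inter_sets i.2.1 j.2.1
      obtain ⟨a, ha⟩ := Ultrafilter.nonempty_of_mem hmem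
      exact ⟨⟨(a, i.1.2 ∩ j.1.2), hmem, ha⟩, inter_subset_left, inter_subset_right⟩
    let s : ι → X := fun a => a.1.1
    have hsmem : ∀ (i : ι), s i ∈ i.1.2 := fun i => i.2.2
    have hcauchy : IsCauchyNet O s := by
      intro U hU
      obtain ⟨V, hV, hVU⟩ := hdbl U hU
      obtain ⟨A, hA, z, hAz⟩ := hcauchyF V hV
      obtain ⟨a₀, ha₀⟩ := Ultrafilter.nonempty_of_mem hA
      refine ⟨⟨(a₀, A), hA, ha₀⟩, fun i hi j hj => ?_⟩
      exact star_trans hVU (hAz (hj (hsmem j))) (hAz (hi (hsmem i)))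
    obtain ⟨q, hq⟩ := hcompl ι hdirected s hcauchy
    -- F converges to q
    have hFq : (F : Filter X) ≤ nhds q := by
      intro N hN
      obtain ⟨U, hU, hUN⟩ := (hbasis q).mem_iff.mp hN
      obtain ⟨V, hV, hVU⟩ := hdbl U hU
      obtain ⟨W, hW, hWV⟩ := hdbl V hV
      obtain ⟨A, hA, z, hAz⟩ := hcauchyF W hW
      obtain ⟨i₀, hi₀⟩ := hq _ ((hbasis q).mem_of_mem hW)
      have hBmem : A ∩ i₀.1.2 ∈ F := F.inter_sets hA i₀.2.1
      obtain ⟨a, ha⟩ := Ultrafilter.nonempty_of_mem hBmem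
      let i₁ : ι := ⟨(a, A ∩ i₀.1.2), hBmem, ha⟩
      have haW : a ∈ stx q W := hi₀ i₁ inter_subset_right
      have haz : a ∈ stx z W := hAz ha.1
      refine F.sets_of_superset hA (fun y hy => hUN ?_)
      -- chain q - a - z - y
      have h1 : a ∈ stx q V := star_trans hWV (mem_stx_self (hcov W hW)) haW
      have h2 : y ∈ stx a V := star_trans hWV haz (hAz hy)
      exact star_trans hVU (stx_symm h1) h2
    have hqcl : q ∈ closure Y := by
      have h1 : (F : Filter X) ≤ nhds q ⊓ Filter.principal (closure Y) :=
        le_inf hFq (Filter.le_principal_iff.mpr hclY)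
      have hne : (nhds q ⊓ Filter.principal (closure Y)).NeBot :=
        Filter.neBot_of_le h1
      rw [← closure_closure (s := Y)]
      exact mem_closure_iff_clusterPt.mpr hne
    exact ⟨q, hqcl, hFq⟩
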